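/- arXiv:1112.2680 — 4 statements merged into one kernel-verified Lean document; each statement's English description precedes it below -/
import Mathlib

section
/- Let X_1,...,X_{n+1} be i.i.d. from a distribution P on a finite set {1,...,k}, with 2k ≤ γn. Conditionally on the multiset of values (order statistics), the probability that X_n or X_{n+1} takes a value appearing at most once among X_1,...,X_{n+1} is less than γ. Consequently, the unconditional probability is also less than γ. -/
open MeasureTheory

lemma aux_real (a : ℝ) (ha : 0 ≤ a) (ha1 : a ≤ 1) (n : ℕ) :
    a * (1 - a) ^ n ≤ 1 / (n + 1) := by
  have h1 : 1 + (n : ℝ) * a ≤ (1 + a) ^ n := one_add_mul_le_pow (by linarith) n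
  have h2 : (1 - a) ^ n * (1 + a) ^ n = (1 - a ^ 2) ^ n := by
    rw [← mul_pow]; ring_nf
  have h3 : (1 - a ^ 2) ^ n ≤ 1 := pow_le_one₀ (by nlinarith) (by nlinarith)
  have h4 : (0:ℝ) ≤ (1 - a) ^ n := pow_nonneg (by linarith) n
  have h5 : ((n : ℝ) + 1) * (a * (1 - a) ^ n) ≤ 1 := by
    have : ((n : ℝ) + 1) * a ≤ 1 + n * a := by nlinarith
    calc ((n : ℝ) + 1) * (a * (1 - a) ^ n) = (((n:ℝ)+1) * a) * (1-a)^n := by ring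
      _ ≤ (1 + n * a) * (1-a)^n := by apply mul_le_mul_of_nonneg_right this h4
      _ ≤ (1 + a)^n * (1-a)^n := by
          apply mul_le_mul_of_nonneg_right h1 h4
      _ = (1 - a^2)^n := by rw [mul_comm]; exact h2
      _ ≤ 1 := h3
  have hpos : (0:ℝ) < (n:ℝ) + 1 := by positivity
  rw [le_div_iff₀ hpos]
  linarith [h5]

lemma event_eq {k n : ℕ} (p : Fin (n + 1)) :
    {ω : Fin (n + 1) → Fin k | (Finset.univ.filter fun i => ω i = ω p).card ≤ 1} =
      ⋃ j : Fin k, Set.univ.pi (fun i => if i = p then ({j} : Set (Fin k)) else {j}ᶜ) := by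
  ext ω
  simp only [Set.mem_setOf_eq, Set.mem_iUnion, Set.mem_pi, Set.mem_univ, forall_true_left]
  constructor
  · intro h
    refine ⟨ω p, fun i => ?_⟩
    split_ifs with hip
    · simp [hip]
    · simp only [Set.mem_compl_iff, Set.mem_singleton_iff]
      intro hcon
      have hsub : ({p, i} : Finset (Fin (n+1))) ⊆ Finset.univ.filter fun i' => ω i' = ω p := by
        intro x hx
        simp only [Finset.mem_insert, Finset.mem_singleton] at hx
        rcases hx with rfl | rfl <;> simp [hcon]
      have h2 : ({p, i} : Finset (Fin (n+1))).card = 2 := by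
        rw [Finset.card_insert_of_notMem (by simp [Ne.symm hip]), Finset.card_singleton]
      have := Finset.card_le_card hsub
      omega
  · rintro ⟨j, hj⟩
    have hsub : (Finset.univ.filter fun i' => ω i' = ω p) ⊆ {p} := by
      intro x hx
      simp only [Finset.mem_filter, Finset.mem_univ, true_and] at hx
      simp only [Finset.mem_singleton]
      by_contra hxp
      have h1 := hj x
      have h2 := hj p
      simp only [if_pos rfl, Set.mem_singleton_iff] at h2
      rw [if_neg hxp] at h1
      simp only [Set.mem_compl_iff, Set.mem_singleton_iff] at h1
      exact h1 (hx.trans h2)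
    calc (Finset.univ.filter fun i' => ω i' = ω p).card ≤ ({p} : Finset (Fin (n+1))).card :=
          Finset.card_le_card hsub
      _ = 1 := Finset.card_singleton p

lemma key_bound {k n : ℕ} (P : Measure (Fin k)) [IsProbabilityMeasure P] (p : Fin (n + 1)) :
    (Measure.pi fun _ : Fin (n + 1) => P)
        {ω | (Finset.univ.filter fun i => ω i = ω p).card ≤ 1}
      ≤ (k : ENNReal) * ENNReal.ofReal (1 / (n + 1)) := by
  rw [event_eq p]
  refine le_trans (measure_iUnion_le _) ?_
  have hterm : ∀ j : Fin k,
      (Measure.pi fun _ : Fin (n + 1) => P)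
        (Set.univ.pi (fun i => if i = p then ({j} : Set (Fin k)) else {j}ᶜ))
        ≤ ENNReal.ofReal (1 / (n + 1)) := by
    intro j
    rw [Measure.pi_pi]
    have hprod : (∏ i : Fin (n+1), P (if i = p then ({j} : Set (Fin k)) else {j}ᶜ))
        = P {j} * P ({j}ᶜ) ^ n := by
      rw [← Finset.mul_prod_erase Finset.univ _ (Finset.mem_univ p)]
      rw [if_pos rfl]
      congr 1
      have hc : ∀ i ∈ Finset.univ.erase p,
          P (if i = p then ({j} : Set (Fin k)) else {j}ᶜ) = P ({j}ᶜ) :=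
        fun i hi => by rw [if_neg (Finset.ne_of_mem_erase hi)]
      rw [Finset.prod_congr rfl hc, Finset.prod_const,
        Finset.card_erase_of_mem (Finset.mem_univ p), Finset.card_univ, Fintype.card_fin,
        Nat.add_sub_cancel]
    rw [hprod]
    -- convert to reals
    have hfin : P {j} ≠ ⊤ := measure_ne_top P _
    set a : ℝ := (P {j}).toReal with ha_def
    have ha0 : 0 ≤ a := ENNReal.toReal_nonneg
    have hle1 : P {j} ≤ 1 := prob_le_one
    have ha1 : a ≤ 1 := by
      rw [ha_def]
      exact ENNReal.toReal_le_of_le_ofReal zero_le_one (by simpa using hle1)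
    have hPj : P {j} = ENNReal.ofReal a := (ENNReal.ofReal_toReal hfin).symm
    have hPc : P ({j}ᶜ) = ENNReal.ofReal (1 - a) := by
      rw [prob_compl_eq_one_sub (measurableSet_singleton j), hPj]
      rw [← ENNReal.ofReal_one, ← ENNReal.ofReal_sub _ ha0]
    rw [hPj, hPc, ← ENNReal.ofReal_pow (by linarith), ← ENNReal.ofReal_mul ha0]
    exact ENNReal.ofReal_le_ofReal (aux_real a ha0 ha1 n)
  calc (∑' j : Fin k, (Measure.pi fun _ : Fin (n + 1) => P)
        (Set.univ.pi (fun i => if i = p then ({j} : Set (Fin k)) else {j}ᶜ)))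
      ≤ ∑' _ : Fin k, ENNReal.ofReal (1 / (n + 1)) := ENNReal.tsum_le_tsum hterm
    _ = (k : ENNReal) * ENNReal.ofReal (1 / (n + 1)) := by
        rw [tsum_fintype, Finset.sum_const, Finset.card_univ, Fintype.card_fin, nsmul_eq_mul]

/-- **Probability of a unique value at one of the last two positions.** Let
`X_1,…,X_{n+1}` be i.i.d. from `P` on `{1,…,k}` with `2k ≤ γn`. The probability
that `X_n` or `X_{n+1}` takes a value appearing at most once in the combined sample
(i.e. lies in `S*`) is less than `γ`. -/
theorem stmt8 {k n : ℕ} (hn : 0 < n) (γ : ℝ)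
    (P : Measure (Fin k)) [IsProbabilityMeasure P]
    (hkn : 2 * (k : ℝ) ≤ γ * n) :
    (Measure.pi fun _ : Fin (n + 1) => P)
        {ω | (Finset.univ.filter fun i => ω i = ω ⟨n - 1, by omega⟩).card ≤ 1 ∨
             (Finset.univ.filter fun i => ω i = ω (Fin.last n)).card ≤ 1}
      < ENNReal.ofReal γ := by
  have hk : 0 < k := by
    rcases Nat.eq_zero_or_pos k with hk0 | hk0
    · exfalso
      have : (Set.univ : Set (Fin k)) = ∅ := by
        subst hk0; ext x; exact absurd x.2 (by omega)
      have h1 : P Set.univ = 1 := measure_univ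
      rw [this, measure_empty] at h1
      exact zero_ne_one h1
    · exact hk0
  have hγ : 0 < γ := by
    have h2k : (0:ℝ) < 2 * k := by positivity
    have hnpos : (0:ℝ) < n := by exact_mod_cast hn
    nlinarith
  set μ := Measure.pi fun _ : Fin (n + 1) => P
  have hA := key_bound P (⟨n - 1, by omega⟩ : Fin (n + 1))
  have hB := key_bound P (Fin.last n)
  have hsub : μ {ω | (Finset.univ.filter fun i => ω i = ω ⟨n - 1, by omega⟩).card ≤ 1 ∨
             (Finset.univ.filter fun i => ω i = ω (Fin.last n)).card ≤ 1}
      ≤ μ {ω | (Finset.univ.filter fun i => ω i = ω ⟨n - 1, by omega⟩).card ≤ 1}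
        + μ {ω | (Finset.univ.filter fun i => ω i = ω (Fin.last n)).card ≤ 1} := by
    refine le_trans (measure_mono ?_) (measure_union_le _ _)
    intro ω hω
    exact hω
  refine lt_of_le_of_lt (hsub.trans (add_le_add hA hB)) ?_
  have hsum : (k : ENNReal) * ENNReal.ofReal (1 / (n + 1))
      + (k : ENNReal) * ENNReal.ofReal (1 / (n + 1))
      = ENNReal.ofReal (2 * k * (1 / (n + 1))) := by
    rw [← two_mul]
    rw [ENNReal.ofReal_mul (by positivity), ENNReal.ofReal_mul (by norm_num)]
    rw [ENNReal.ofReal_ofNat, ENNReal.ofReal_natCast]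
    ring
  rw [hsum]
  rw [ENNReal.ofReal_lt_ofReal_iff hγ]
  have hn1 : (0:ℝ) < (n:ℝ) + 1 := by positivity
  rw [mul_one_div, div_lt_iff₀ hn1]
  have hnn : (1:ℝ) ≤ (n:ℝ) := by exact_mod_cast hn
  nlinarith
end

section
/- The sparse-histogram mechanism, which releases z_j = θ_j exactly for bins j with empirical count zero (when 2k ≤ γn) and z_j = θ_j + (2/(nα))L_j with i.i.d. standard Laplace noise L_j otherwise, satisfies (α,γ)-random differential privacy. -/
open MeasureTheory

def firstN {𝒳 : Type*} {n : ℕ} (ω : Fin (n + 1) → 𝒳) : Fin n → 𝒳 :=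
  fun i => ω i.castSucc

def swapLast {𝒳 : Type*} {n : ℕ} (ω : Fin (n + 1) → 𝒳) : Fin n → 𝒳 :=
  fun i => if (i : ℕ) = n - 1 then ω (Fin.last n) else ω i.castSucc

/-- Number of data points falling in bin `j`. -/
def binCount {k n : ℕ} (x : Fin n → Fin k) (j : Fin k) : ℕ :=
  (Finset.univ.filter fun i => x i = j).card

/-- The empirical histogram `θ_j = (1/n) Σᵢ 1{xᵢ ∈ B_j}`. -/
noncomputable def hist {k n : ℕ} (x : Fin n → Fin k) (j : Fin k) : ℝ :=
  (binCount x j : ℝ) / n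

open Classical in
/-- The sparse-histogram mechanism: when `2k ≤ γn`, empty bins are released exactly
(`z_j = θ_j`) and occupied bins get Laplace noise `z_j = θ_j + (2/(nα)) L_j` with
`L_j` i.i.d. standard Laplace (`lap`). -/
noncomputable def sparseMech {k n : ℕ} (lap : Measure ℝ) [IsProbabilityMeasure lap]
    (α γ : ℝ) (x : Fin n → Fin k) : Measure (Fin k → ℝ) :=
  (Measure.pi fun _ : Fin k => lap).map
    (fun L j => if binCount x j = 0 ∧ 2 * (k : ℝ) ≤ γ * n then hist x j
      else hist x j + 2 / ((n : ℝ) * α) * L j)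

/-!
Neighbouring samples `firstN ω` and `swapLast ω` differ only in their last point. If both
`ω (n-1)` and `ω n` already occur among the first `n - 1` points, the two histograms have the
same empty bins: the exactly released coordinates coincide, and the noisy ones differ by a
shift `d` with `∑ |d_j| ≤ α`, since the histograms are `2/n`-close in `ℓ¹`. Translating a
product of Laplace laws by `d` multiplies its density by at most `exp (∑ |d_j|)`, which gives
the `e^α` bound for every set `B`. A fixed point avoids `m` independent others with probability
`∑_b p_b (1 - p_b)^m ≤ k / (m + 1)`, so the bad event has probability at most `2k/n ≤ γ`.
-/

open MeasureTheory ProbabilityTheory Finset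
open scoped ENNReal

theorem MeasureTheory.Measure.pi_withDensity {ι : Type*} [Fintype ι] {X : ι → Type*}
    [∀ i, MeasurableSpace (X i)] (μ : ∀ i, Measure (X i)) [∀ i, IsProbabilityMeasure (μ i)]
    (f : ∀ i, X i → ℝ≥0∞) (hf : ∀ i, Measurable (f i))
    [∀ i, SigmaFinite ((μ i).withDensity (f i))] :
    Measure.pi (fun i => (μ i).withDensity (f i))
      = (Measure.pi μ).withDensity (fun x => ∏ i, f i (x i)) := by
  refine Measure.pi_eq fun s hs => ?_
  have hpi : MeasurableSet (Set.univ.pi s) := .univ_pi hs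
  have hind : (Set.univ.pi s).indicator (fun x => ∏ i, f i (x i))
      = fun x => ∏ i, (s i).indicator (f i) (x i) := by
    ext x
    by_cases hx : x ∈ Set.univ.pi s
    · simp_all [Set.indicator_of_mem]
    · obtain ⟨i, hi⟩ : ∃ i, x i ∉ s i := by simpa using hx
      rw [Set.indicator_of_notMem hx]
      exact (Finset.prod_eq_zero (Finset.mem_univ i) (Set.indicator_of_notMem hi _)).symm
  rw [withDensity_apply _ hpi, ← lintegral_indicator hpi, hind,
    lintegral_prod_eq_prod_lintegral_of_indepFun _ _
      (iIndepFun_pi fun i => ((hf i).indicator (hs i)).aemeasurable)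
      fun i => ((hf i).indicator (hs i)).comp (measurable_pi_apply i)]
  refine Finset.prod_congr rfl fun i _ => ?_
  rw [withDensity_apply _ (hs i), ← lintegral_indicator (hs i)]
  exact (measurePreserving_eval μ i).lintegral_comp ((hf i).indicator (hs i))

noncomputable def laplace : Measure ℝ :=
  volume.withDensity fun t => ENNReal.ofReal (1 / 2 * Real.exp (-|t|))

theorem laplace_map_add_const (a : ℝ) :
    laplace.map (· + a)
      = laplace.withDensity fun t => ENNReal.ofReal (Real.exp (|t| - |t - a|)) := by
  ext s hs
  have hdens : ∀ t, ENNReal.ofReal (1 / 2 * Real.exp (-|t - a|))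
      = ENNReal.ofReal (1 / 2 * Real.exp (-|t|)) * ENNReal.ofReal (Real.exp (|t| - |t - a|)) := by
    intro t
    rw [← ENNReal.ofReal_mul (by positivity), mul_assoc, ← Real.exp_add]
    ring_nf
  rw [Measure.map_apply (measurable_add_const a) hs, laplace,
    withDensity_apply _ (measurable_add_const a hs),
    ← withDensity_mul _ (by fun_prop) (by fun_prop), withDensity_apply _ hs]
  simp_rw [Pi.mul_apply, ← hdens]
  simpa using (measurePreserving_add_right volume a).setLIntegral_comp_preimage_emb
    (measurableEmbedding_addRight a) (fun t => ENNReal.ofReal (1 / 2 * Real.exp (-|t - a|))) s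

theorem laplace_pi_map_add_le {ι : Type*} [Fintype ι] [IsProbabilityMeasure laplace]
    (d : ι → ℝ) :
    (Measure.pi fun _ : ι => laplace).map (· + d)
      ≤ ENNReal.ofReal (Real.exp (∑ i, |d i|)) • Measure.pi fun _ : ι => laplace := by
  have hsf (i : ι) : SigmaFinite
      (laplace.withDensity fun t => ENNReal.ofReal (Real.exp (|t| - |t - d i|))) := by
    rw [← laplace_map_add_const]; infer_instance
  have hdens (x : ι → ℝ) : ∏ i, ENNReal.ofReal (Real.exp (|x i| - |x i - d i|))
      ≤ ENNReal.ofReal (Real.exp (∑ i, |d i|)) := by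
    rw [← ENNReal.ofReal_prod_of_nonneg fun i _ => (Real.exp_pos _).le, ← Real.exp_sum]
    refine ENNReal.ofReal_le_ofReal (Real.exp_le_exp.2 (Finset.sum_le_sum fun i _ => ?_))
    simpa using abs_sub_abs_le_abs_sub (x i) (x i - d i)
  calc (Measure.pi fun _ : ι => laplace).map (· + d)
      = Measure.pi fun i => laplace.map (· + d i) :=
        Measure.pi_map_pi fun i => (measurable_add_const _).aemeasurable
    _ = (Measure.pi fun _ : ι => laplace).withDensity
          fun x => ∏ i, ENNReal.ofReal (Real.exp (|x i| - |x i - d i|)) := by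
        simp_rw [laplace_map_add_const]
        exact Measure.pi_withDensity _ _ fun i => by fun_prop
    _ ≤ (Measure.pi fun _ : ι => laplace).withDensity
          fun _ => ENNReal.ofReal (Real.exp (∑ i, |d i|)) :=
        withDensity_mono (Filter.Eventually.of_forall hdens)
    _ = _ := withDensity_const _

section Histogram

variable {k n : ℕ}

theorem binCount_eq_zero_iff (x : Fin n → Fin k) (j : Fin k) :
    binCount x j = 0 ↔ j ∉ Set.range x := by
  simp [binCount, Finset.filter_eq_empty_iff]

theorem binCount_sub_binCount {x x' : Fin n → Fin k} {i₀ : Fin n}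
    (hx : ∀ i, i ≠ i₀ → x i = x' i) (j : Fin k) :
    (binCount x' j : ℝ) - binCount x j
      = (if x' i₀ = j then 1 else 0) - (if x i₀ = j then 1 else 0) := by
  simp only [binCount, Finset.card_filter]
  push_cast
  rw [← Finset.sum_sub_distrib]
  exact Finset.sum_eq_single_of_mem i₀ (Finset.mem_univ i₀) fun i _ hi => by
    rw [hx i hi, sub_self]

theorem sum_abs_hist_sub_hist_le {x x' : Fin n → Fin k} {i₀ : Fin n}
    (hx : ∀ i, i ≠ i₀ → x i = x' i) :
    ∑ j, |hist x' j - hist x j| ≤ 2 / n := by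
  have hbound (j : Fin k) : |hist x' j - hist x j|
      ≤ ((if x' i₀ = j then 1 else 0) + (if x i₀ = j then 1 else 0)) / n := by
    rw [hist, hist, ← sub_div, binCount_sub_binCount hx, abs_div, Nat.abs_cast]
    gcongr
    split_ifs <;> norm_num
  calc ∑ j, |hist x' j - hist x j|
      ≤ ∑ j, ((if x' i₀ = j then 1 else 0) + (if x i₀ = j then 1 else 0)) / (n : ℝ) :=
        Finset.sum_le_sum fun j _ => hbound j
    _ = 2 / n := by
        rw [← Finset.sum_div, Finset.sum_add_distrib]
        simp only [Finset.sum_ite_eq, Finset.mem_univ, if_true]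
        norm_num

end Histogram

section Mechanism

variable {k n : ℕ} {α γ : ℝ}

open Classical in
noncomputable def sparseRelease (α γ : ℝ) (x : Fin n → Fin k) (L : Fin k → ℝ) :
    Fin k → ℝ :=
  fun j => if binCount x j = 0 ∧ 2 * (k : ℝ) ≤ γ * n then hist x j
    else hist x j + 2 / ((n : ℝ) * α) * L j

theorem sparseMech_eq_map (lap : Measure ℝ) [IsProbabilityMeasure lap] (x : Fin n → Fin k) :
    sparseMech lap α γ x = (Measure.pi fun _ : Fin k => lap).map (sparseRelease α γ x) :=
  rfl

theorem measurable_sparseRelease (x : Fin n → Fin k) : Measurable (sparseRelease α γ x) := by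
  refine measurable_pi_lambda _ fun j => ?_
  unfold sparseRelease
  split_ifs <;> fun_prop

theorem sparseRelease_eq_comp_add {x x' : Fin n → Fin k}
    (hzero : ∀ j, binCount x j = 0 ↔ binCount x' j = 0) (hn : n ≠ 0) (hα : α ≠ 0) :
    sparseRelease α γ x' = sparseRelease α γ x ∘
      (· + fun j => (hist x' j - hist x j) / (2 / ((n : ℝ) * α))) := by
  ext L j
  simp only [sparseRelease, Function.comp_apply, Pi.add_apply, hzero]
  split_ifs with h
  · simp [hist, h.1, (hzero j).2 h.1]
  · field_simp
    ring

theorem sparseMech_le_exp_mul {lap : Measure ℝ} [IsProbabilityMeasure lap] (hlap : lap = laplace)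
    (hα : 0 < α)
    {x x' : Fin n → Fin k} {i₀ : Fin n} (hx : ∀ i, i ≠ i₀ → x i = x' i)
    (hzero : ∀ j, binCount x j = 0 ↔ binCount x' j = 0) (B : Set (Fin k → ℝ)) :
    sparseMech lap α γ x' B ≤ ENNReal.ofReal (Real.exp α) * sparseMech lap α γ x B := by
  subst hlap
  have hn : (0 : ℝ) < n := by exact_mod_cast i₀.pos
  set c : ℝ := 2 / ((n : ℝ) * α)
  set d : Fin k → ℝ := fun j => (hist x' j - hist x j) / c
  have hd : ∑ j, |d j| ≤ α := by
    have hc : 0 < c := by positivity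
    calc ∑ j, |d j| = (∑ j, |hist x' j - hist x j|) / c := by
          simp only [d, abs_div, abs_of_pos hc, Finset.sum_div]
      _ ≤ 2 / n / c := by gcongr; exact sum_abs_hist_sub_hist_le hx
      _ = α := by simp only [c]; field_simp
  calc sparseMech laplace α γ x' B
      = ((Measure.pi fun _ : Fin k => laplace).map (· + d)).map (sparseRelease α γ x) B := by
        rw [sparseMech_eq_map, sparseRelease_eq_comp_add hzero i₀.pos.ne' hα.ne',
          Measure.map_map (measurable_sparseRelease x) (measurable_add_const d)]
    _ ≤ (ENNReal.ofReal (Real.exp (∑ j, |d j|)) • Measure.pi fun _ : Fin k => laplace).map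
          (sparseRelease α γ x) B :=
        Measure.le_iff'.1 (Measure.map_mono (laplace_pi_map_add_le d)
          (measurable_sparseRelease x)) B
    _ = ENNReal.ofReal (Real.exp (∑ j, |d j|)) * sparseMech laplace α γ x B := by
        rw [Measure.map_smul]; rfl
    _ ≤ ENNReal.ofReal (Real.exp α) * sparseMech laplace α γ x B := by gcongr

end Mechanism

theorem mul_one_sub_pow_le (m : ℕ) {p : ℝ} (h0 : 0 ≤ p) (h1 : p ≤ 1) :
    p * (1 - p) ^ m ≤ 1 / (m + 1) := by
  have hbernoulli : 1 + m * p ≤ (1 + p) ^ m := one_add_mul_le_pow (by linarith) m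
  have hsq : ((1 + p) * (1 - p)) ^ m ≤ 1 := pow_le_one₀ (by nlinarith) (by nlinarith)
  have hpow : 0 ≤ (1 - p) ^ m := pow_nonneg (by linarith) m
  rw [le_div_iff₀ (by positivity)]
  calc p * (1 - p) ^ m * (m + 1) ≤ (1 + m * p) * (1 - p) ^ m := by nlinarith
    _ ≤ (1 + p) ^ m * (1 - p) ^ m := by gcongr
    _ = ((1 + p) * (1 - p)) ^ m := (mul_pow _ _ _).symm
    _ ≤ 1 := hsq

theorem pi_setOf_forall_ne_le {ι β : Type*} [Fintype ι] [DecidableEq ι] [Fintype β]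
    [MeasurableSpace β] [MeasurableSingletonClass β] (P : Measure β) [IsProbabilityMeasure P]
    {A : Finset ι} {t : ι} (ht : t ∉ A) :
    Measure.pi (fun _ : ι => P) {ω | ∀ i ∈ A, ω i ≠ ω t}
      ≤ ENNReal.ofReal (Fintype.card β / (#A + 1 : ℕ)) := by
  set box : β → Set (ι → β) := fun b =>
    Set.univ.pi (Function.update (fun i => if i ∈ A then {b}ᶜ else Set.univ) t {b})
  have hcover : {ω | ∀ i ∈ A, ω i ≠ ω t} ⊆ ⋃ b, box b := by
    intro ω hω
    refine Set.mem_iUnion.2 ⟨ω t, fun i _ => ?_⟩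
    rcases eq_or_ne i t with rfl | hit
    · simp
    · simp only [Function.update_of_ne hit]
      split_ifs with hi
      exacts [hω i hi, trivial]
  have hbox (b : β) :
      Measure.pi (fun _ : ι => P) (box b) ≤ ENNReal.ofReal (1 / (#A + 1 : ℕ)) := by
    have hprod : ∏ i, P (Function.update (fun i => if i ∈ A then {b}ᶜ else Set.univ) t {b} i)
        = P {b} * (1 - P {b}) ^ #A := by
      simp_rw [Function.apply_update (fun _ => P), Finset.prod_update_of_mem (Finset.mem_univ t),
        apply_ite P, measure_univ, Finset.prod_ite_mem, Finset.prod_const,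
        prob_compl_eq_one_sub (measurableSet_singleton b)]
      congr 3
      ext i
      simp only [Finset.mem_inter, Finset.mem_sdiff, Finset.mem_univ, Finset.mem_singleton,
        true_and]
      exact ⟨fun h => h.2, fun h => ⟨fun hit => ht (hit ▸ h), h⟩⟩
    rw [Measure.pi_pi, hprod, ← ofReal_measureReal, ← ENNReal.ofReal_one,
      ← ENNReal.ofReal_sub _ measureReal_nonneg, ← ENNReal.ofReal_pow (by simp),
      ← ENNReal.ofReal_mul measureReal_nonneg]
    exact ENNReal.ofReal_le_ofReal (by
      simpa using mul_one_sub_pow_le #A measureReal_nonneg (measureReal_le_one (μ := P)))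
  calc Measure.pi (fun _ : ι => P) {ω | ∀ i ∈ A, ω i ≠ ω t}
      ≤ ∑ b, Measure.pi (fun _ : ι => P) (box b) :=
        (measure_mono hcover).trans (measure_iUnion_fintype_le _ _)
    _ ≤ ∑ _b : β, ENNReal.ofReal (1 / (#A + 1 : ℕ)) := Finset.sum_le_sum fun b _ => hbox b
    _ = ENNReal.ofReal (Fintype.card β / (#A + 1 : ℕ)) := by
        rw [Finset.sum_const, nsmul_eq_mul, Finset.card_univ, ← ENNReal.ofReal_natCast,
          ← ENNReal.ofReal_mul (by positivity), mul_one_div]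

theorem range_eq_range_of_eq_off {ι β : Type*} {x x' : ι → β} {i₀ : ι}
    (hx : ∀ i, i ≠ i₀ → x i = x' i) (h : ∃ i, i ≠ i₀ ∧ x i = x i₀)
    (h' : ∃ i, i ≠ i₀ ∧ x' i = x' i₀) :
    Set.range x = Set.range x' := by
  have hsub {y y' : ι → β} (hy : ∀ i, i ≠ i₀ → y i = y' i)
      (h : ∃ i, i ≠ i₀ ∧ y i = y i₀) : Set.range y ⊆ Set.range y' := by
    rintro _ ⟨i, rfl⟩
    rcases eq_or_ne i i₀ with rfl | hi
    · obtain ⟨u, hu, hyu⟩ := h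
      exact ⟨u, by rw [← hy u hu, hyu]⟩
    · exact ⟨i, (hy i hi).symm⟩
  exact (hsub hx h).antisymm (hsub (fun i hi => (hx i hi).symm) h')

section Neighbours

variable {β : Type*} {n : ℕ}

theorem firstN_eq_swapLast (ω : Fin (n + 1) → β) {i : Fin n} (hi : (i : ℕ) ≠ n - 1) :
    firstN ω i = swapLast ω i := by
  simp [firstN, swapLast, hi]

theorem range_firstN_eq_range_swapLast {ω : Fin (n + 1) → β}
    (h₁ : ∃ i < (⟨n - 1, by omega⟩ : Fin (n + 1)), ω i = ω ⟨n - 1, by omega⟩)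
    (h₂ : ∃ i < (⟨n - 1, by omega⟩ : Fin (n + 1)), ω i = ω (Fin.last n)) :
    Set.range (firstN ω) = Set.range (swapLast ω) := by
  obtain ⟨u, hu : (u : ℕ) < n - 1, hωu⟩ := h₁
  obtain ⟨v, hv : (v : ℕ) < n - 1, hωv⟩ := h₂
  have hn : 0 < n := by omega
  refine range_eq_range_of_eq_off (i₀ := ⟨n - 1, by omega⟩)
    (fun i hi => firstN_eq_swapLast ω fun h => hi (Fin.ext h))
    ⟨⟨u, by omega⟩, fun h => by simp [Fin.ext_iff] at h; omega, ?_⟩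
    ⟨⟨v, by omega⟩, fun h => by simp [Fin.ext_iff] at h; omega, ?_⟩
  · simpa [firstN, Fin.castSucc] using hωu
  · simpa [swapLast, Fin.castSucc, hv.ne] using hωv

theorem sparseMech_firstN_swapLast_le {k : ℕ} {α γ : ℝ} {lap : Measure ℝ}
    [IsProbabilityMeasure lap] (hlap : lap = laplace) (hα : 0 < α) {ω : Fin (n + 1) → Fin k}
    (h₁ : ∃ i < (⟨n - 1, by omega⟩ : Fin (n + 1)), ω i = ω ⟨n - 1, by omega⟩)
    (h₂ : ∃ i < (⟨n - 1, by omega⟩ : Fin (n + 1)), ω i = ω (Fin.last n))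
    (B : Set (Fin k → ℝ)) :
    sparseMech lap α γ (firstN ω) B ≤
        ENNReal.ofReal (Real.exp α) * sparseMech lap α γ (swapLast ω) B ∧
      sparseMech lap α γ (swapLast ω) B ≤
        ENNReal.ofReal (Real.exp α) * sparseMech lap α γ (firstN ω) B := by
  have hn : 0 < n := by obtain ⟨u, hu : (u : ℕ) < n - 1, -⟩ := h₁; omega
  have hrange := range_firstN_eq_range_swapLast h₁ h₂
  have hzero (j : Fin k) : binCount (firstN ω) j = 0 ↔ binCount (swapLast ω) j = 0 := by
    rw [binCount_eq_zero_iff, binCount_eq_zero_iff, hrange]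
  have hx (i : Fin n) (hi : i ≠ ⟨n - 1, by omega⟩) : firstN ω i = swapLast ω i :=
    firstN_eq_swapLast ω fun h => hi (Fin.ext h)
  exact ⟨sparseMech_le_exp_mul hlap hα (fun i hi => (hx i hi).symm) (fun j => (hzero j).symm) B,
    sparseMech_le_exp_mul hlap hα hx hzero B⟩

theorem pi_setOf_forall_lt_ne_le {k : ℕ} (hn : 0 < n) (P : Measure (Fin k))
    [IsProbabilityMeasure P] {t : Fin (n + 1)} (ht : n - 1 ≤ t) :
    Measure.pi (fun _ => P) {ω | ∀ i < (⟨n - 1, by omega⟩ : Fin (n + 1)), ω i ≠ ω t}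
      ≤ ENNReal.ofReal (k / n) := by
  have hcard : #(Finset.Iio (⟨n - 1, by omega⟩ : Fin (n + 1))) + 1 = n := by simp; omega
  have h := pi_setOf_forall_ne_le P (A := Finset.Iio ⟨n - 1, by omega⟩) (t := t)
    (by simpa [Fin.lt_def] using ht)
  simpa only [hcard, Fintype.card_fin, Finset.mem_Iio] using h

end Neighbours

/-- **The sparse-histogram mechanism is `(α,γ)`-RDP.** With `X_1,…,X_{n+1}` i.i.d.
from `P` on the `k` bins and `2k ≤ γn`, with probability at least `1-γ` over the
data, for every measurable `B`,
`e^{-α} ≤ Q(B|X)/Q(B|X') ≤ e^α` where `X = (X_1,…,X_n)`, `X' = (X_1,…,X_{n-1},X_{n+1})`. -/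
theorem stmt9 {k n : ℕ} (hn : 0 < n) (α γ : ℝ) (hα : 0 < α) (hγ : 0 < γ)
    (P : Measure (Fin k)) [IsProbabilityMeasure P]
    (lap : Measure ℝ) [IsProbabilityMeasure lap]
    (hlap : lap = volume.withDensity fun t => ENNReal.ofReal ((1 / 2) * Real.exp (-|t|)))
    (hkn : 2 * (k : ℝ) ≤ γ * n) :
    (Measure.pi fun _ : Fin (n + 1) => P)
        {ω | ∀ B : Set (Fin k → ℝ), MeasurableSet B →
          sparseMech lap α γ (firstN ω) B ≤
              ENNReal.ofReal (Real.exp α) * sparseMech lap α γ (swapLast ω) B ∧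
          sparseMech lap α γ (swapLast ω) B ≤
              ENNReal.ofReal (Real.exp α) * sparseMech lap α γ (firstN ω) B}
      ≥ ENNReal.ofReal (1 - γ) := by
  set t₁ : Fin (n + 1) := ⟨n - 1, by omega⟩
  set bad := {ω : Fin (n + 1) → Fin k | ∀ i < t₁, ω i ≠ ω t₁} ∪
    {ω | ∀ i < t₁, ω i ≠ ω (Fin.last n)}
  have hbad : Measure.pi (fun _ => P) bad ≤ ENNReal.ofReal γ :=
    calc _ ≤ ENNReal.ofReal (k / n) + ENNReal.ofReal (k / n) :=
          (measure_union_le _ _).trans (add_le_add (pi_setOf_forall_lt_ne_le hn P le_rfl)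
            (pi_setOf_forall_lt_ne_le hn P (by simp)))
      _ ≤ ENNReal.ofReal γ := by
          rw [← ENNReal.ofReal_add (by positivity) (by positivity)]
          refine ENNReal.ofReal_le_ofReal ?_
          rw [← add_div, div_le_iff₀ (by positivity)]
          linarith
  refine le_trans ?_ (measure_mono (s := badᶜ) fun ω hω B _ => ?_)
  · calc ENNReal.ofReal (1 - γ) = 1 - ENNReal.ofReal γ := by
          rw [ENNReal.ofReal_sub _ hγ.le, ENNReal.ofReal_one]
      _ ≤ 1 - Measure.pi (fun _ => P) bad := tsub_le_tsub_left hbad 1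
      _ = Measure.pi (fun _ => P) badᶜ :=
          (prob_compl_eq_one_sub (Set.toFinite _).measurableSet).symm
  · simp only [bad, Set.mem_compl_iff, Set.mem_union, Set.mem_ofPred_eq, not_or] at hω
    push Not at hω
    exact sparseMech_firstN_swapLast_le hlap hα hω.1 hω.2 B
end

section
/- Let ε ∈ (0,2). Suppose for all neighboring databases X ~ X' and measurable B, Q_n(B|X) ≤ e^α Q_n(B|X') + η(n), where η(n) = o(n^{-p}) for every p. If an α-relaxed-DP mechanism (in this sense) satisfies sup_θ R(θ,Q_n) ≤ c_0/(αn) for k=2, then for all sufficiently large n, inf_θ R(θ,Q_n) ≥ c_3/(αn) for some constant c_3 > 0. Hence the (α,η)-approximate DP relaxation does not escape the uniform lower bound. -/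
open MeasureTheory

def Grid (n : ℕ) (θ : ℝ) : Prop := ∃ a : ℕ, a ≤ n ∧ θ = (a : ℝ) / n

/-!
Group privacy: chaining the approximate-DP inequality along the `m` grid steps between `θ₁`
and `θ₀` gives `Q(B|θ₁) ≤ e^{mα} Q(B|θ₀) + m e^{mα} η(n)`. Take `m ≈ 4c₀/α` and `θ₁` at
distance `m/n` from `θ₀`. By Markov's inequality the risk bound at `θ₁` puts mass `≥ 1/2` of
`Q(·|θ₁)` on the ball of radius `m/(2n)` around `θ₁`. Once `η(n)` is small this forces mass
`≥ e^{-mα}/4` of `Q(·|θ₀)` on that ball, all of whose points are at distance `≥ m/(2n)` from `θ₀`.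
-/

open Filter Topology
open scoped ENNReal

theorem le_pow_mul_add_of_forall_le_mul_add {f : ℕ → ℝ≥0∞} {c d : ℝ≥0∞} {m : ℕ} (hc : 1 ≤ c)
    (h : ∀ i < m, f i ≤ c * f (i + 1) + d) : f 0 ≤ c ^ m * f m + m * c ^ m * d := by
  induction m with
  | zero => simp
  | succ m ih =>
    calc f 0 ≤ c ^ m * f m + m * c ^ m * d := ih fun i hi => h i (by omega)
      _ ≤ c ^ m * (c * f (m + 1) + d) + m * c ^ m * d := by gcongr; exact h m (by omega)
      _ = c ^ (m + 1) * f (m + 1) + (m + 1) * c ^ m * d := by ring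
      _ ≤ c ^ (m + 1) * f (m + 1) + ((m + 1 : ℕ) : ℝ≥0∞) * c ^ (m + 1) * d := by
        push_cast
        gcongr
        exact m.le_succ

theorem abs_natCast_succ_div_sub_div (k n : ℕ) : |((k + 1 : ℕ) : ℝ) / n - k / n| ≤ 1 / n := by
  rw [← sub_div, Nat.cast_succ, add_sub_cancel_left, abs_of_nonneg (by positivity)]

theorem exists_grid_dist_le_pow_mul_add {Q : ℝ → Measure ℝ} {n a m : ℕ} {c d : ℝ≥0∞}
    (hc : 1 ≤ c)
    (hDP : ∀ θ θ' : ℝ, Grid n θ → Grid n θ' → |θ - θ'| ≤ 1 / (n : ℝ) →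
      ∀ B : Set ℝ, MeasurableSet B → Q θ B ≤ c * Q θ' B + d)
    (ha : a ≤ n) (hm : 2 * m ≤ n) :
    ∃ θ₁, Grid n θ₁ ∧ |θ₁ - a / n| = m / n ∧
      ∀ B, MeasurableSet B → Q θ₁ B ≤ c ^ m * Q (a / n) B + m * c ^ m * d := by
  rcases le_or_gt (a + m) n with hup | hdown
  · refine ⟨((a + m : ℕ) : ℝ) / n, ⟨a + m, hup, rfl⟩, ?_, fun B hB => ?_⟩
    · rw [← sub_div, Nat.cast_add, add_sub_cancel_left, abs_of_nonneg (by positivity)]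
    · have := le_pow_mul_add_of_forall_le_mul_add
        (m := m) (f := fun i => Q (((a + m - i : ℕ) : ℝ) / n) B) hc fun i hi => by
          have hidx : a + m - i = a + m - (i + 1) + 1 := by omega
          simp only [hidx]
          exact hDP _ _ ⟨a + m - (i + 1) + 1, by omega, rfl⟩ ⟨a + m - (i + 1), by omega, rfl⟩
            (abs_natCast_succ_div_sub_div _ _) B hB
      simpa using this
  · obtain ⟨b, rfl⟩ : ∃ b, a = b + m := ⟨a - m, by omega⟩
    refine ⟨(b : ℝ) / n, ⟨b, by omega, rfl⟩, ?_, fun B hB => ?_⟩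
    · rw [← sub_div, Nat.cast_add, sub_add_cancel_left, abs_div, abs_neg, Nat.abs_cast,
        Nat.abs_cast]
    · have := le_pow_mul_add_of_forall_le_mul_add
        (m := m) (f := fun i => Q (((b + i : ℕ) : ℝ) / n) B) hc fun i hi =>
          hDP _ _ ⟨b + i, by omega, rfl⟩ ⟨b + i + 1, by omega, rfl⟩
            (by rw [abs_sub_comm]; exact abs_natCast_succ_div_sub_div _ _) B hB
      simpa using this

theorem inv_two_le_measure_ball_of_lintegral_le {μ : Measure ℝ} [IsProbabilityMeasure μ]
    {x r : ℝ} (hr : 0 < r) (h : ∫⁻ t, ENNReal.ofReal |t - x| ∂μ ≤ ENNReal.ofReal (r / 2)) :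
    2⁻¹ ≤ μ (Metric.ball x r) := by
  have hcompl : {t | ENNReal.ofReal r ≤ ENNReal.ofReal |t - x|} = (Metric.ball x r)ᶜ := by
    ext t
    simp [ENNReal.ofReal_le_ofReal_iff (abs_nonneg _), Real.dist_eq]
  have hmarkov := mul_meas_ge_le_lintegral₀ (μ := μ) (f := fun t => ENNReal.ofReal |t - x|)
    (by fun_prop) (ENNReal.ofReal r)
  rw [hcompl] at hmarkov
  have hcompl_le : μ (Metric.ball x r)ᶜ ≤ 2⁻¹ := by
    refine (ENNReal.mul_le_mul_iff_right (by simpa using hr) ENNReal.ofReal_ne_top).1 ?_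
    rw [ENNReal.ofReal_div_of_pos two_pos, ENNReal.ofReal_ofNat, div_eq_mul_inv] at h
    exact hmarkov.trans h
  rw [← compl_compl (Metric.ball x r),
    prob_compl_eq_one_sub Metric.isOpen_ball.measurableSet.compl, ← ENNReal.one_sub_inv_two]
  exact tsub_le_tsub_left hcompl_le 1

theorem ofReal_mul_measure_ball_le_lintegral {μ : Measure ℝ} {x y r : ℝ} (hxy : 2 * r ≤ |y - x|) :
    ENNReal.ofReal r * μ (Metric.ball y r) ≤ ∫⁻ t, ENNReal.ofReal |t - x| ∂μ :=
  calc ENNReal.ofReal r * μ (Metric.ball y r)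
      = ∫⁻ _ in Metric.ball y r, ENNReal.ofReal r ∂μ := (setLIntegral_const _ _).symm
    _ ≤ ∫⁻ t in Metric.ball y r, ENNReal.ofReal |t - x| ∂μ :=
        setLIntegral_mono (by fun_prop) fun t ht => ENNReal.ofReal_le_ofReal <| by
          rw [Metric.mem_ball, Real.dist_eq] at ht
          linarith [abs_sub_le y t x, abs_sub_comm t y]
    _ ≤ ∫⁻ t, ENNReal.ofReal |t - x| ∂μ := setLIntegral_le_lintegral _ _

theorem ofReal_div_le_lintegral_of_transfer {μ₀ μ₁ : Measure ℝ} [IsProbabilityMeasure μ₁]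
    {x₀ x₁ r E : ℝ} {δ : ℝ≥0∞} (hr : 0 < r) (hE : 0 < E) (hx : 2 * r ≤ |x₁ - x₀|)
    (hδ : δ ≤ 4⁻¹) (htransfer : ∀ B, MeasurableSet B → μ₁ B ≤ ENNReal.ofReal E * μ₀ B + δ)
    (hrisk : ∫⁻ t, ENNReal.ofReal |t - x₁| ∂μ₁ ≤ ENNReal.ofReal (r / 2)) :
    ENNReal.ofReal (r / (4 * E)) ≤ ∫⁻ t, ENNReal.ofReal |t - x₀| ∂μ₀ := by
  have hball : 4⁻¹ ≤ ENNReal.ofReal E * μ₀ (Metric.ball x₁ r) := by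
    have h := (inv_two_le_measure_ball_of_lintegral_le hr hrisk).trans
      ((htransfer _ Metric.isOpen_ball.measurableSet).trans (add_le_add le_rfl hδ))
    have h4 : (4⁻¹ : ℝ≥0∞) + 4⁻¹ = 2⁻¹ := by
      rw [← two_mul, show (4 : ℝ≥0∞) = 2 * 2 by norm_num, ENNReal.mul_inv (by simp) (by simp),
        ← mul_assoc, ENNReal.mul_inv_cancel (by simp) (by simp), one_mul]
    rw [← h4] at h
    exact (ENNReal.add_le_add_iff_right (by simp)).1 h
  rw [div_mul_eq_div_div, ENNReal.ofReal_div_of_pos hE]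
  refine ENNReal.div_le_of_le_mul ?_
  calc ENNReal.ofReal (r / 4) = ENNReal.ofReal r * 4⁻¹ := by
        rw [ENNReal.ofReal_div_of_pos four_pos, ENNReal.ofReal_ofNat, div_eq_mul_inv]
    _ ≤ ENNReal.ofReal r * (ENNReal.ofReal E * μ₀ (Metric.ball x₁ r)) := by gcongr
    _ = ENNReal.ofReal E * (ENNReal.ofReal r * μ₀ (Metric.ball x₁ r)) := by ring
    _ ≤ (∫⁻ t, ENNReal.ofReal |t - x₀| ∂μ₀) * ENNReal.ofReal E := by
        rw [mul_comm _ (ENNReal.ofReal E)]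
        gcongr
        exact ofReal_mul_measure_ball_le_lintegral hx

theorem stmt13_general (α c0 : ℝ) (hα : 0 < α) (hc0 : 0 < c0)
    (Q : (n : ℕ) → ℝ → Measure ℝ) (hprob : ∀ n θ, IsProbabilityMeasure (Q n θ))
    (η : ℕ → ℝ)
    (hneg : ∀ p : ℕ, Filter.Tendsto (fun n : ℕ => η n * (n : ℝ) ^ p)
      Filter.atTop (nhds 0))
    (hDP : ∀ n : ℕ, ∀ θ θ' : ℝ, Grid n θ → Grid n θ' → |θ - θ'| ≤ 1 / (n : ℝ) →
      ∀ B : Set ℝ, MeasurableSet B →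
        Q n θ B ≤ ENNReal.ofReal (Real.exp α) * Q n θ' B + ENNReal.ofReal (η n))
    (hub : ∀ n : ℕ, 0 < n → ∀ θ : ℝ, Grid n θ →
      ∫⁻ t, ENNReal.ofReal |t - θ| ∂(Q n θ) ≤ ENNReal.ofReal (c0 / (α * n))) :
    ∃ c3 : ℝ, 0 < c3 ∧ ∃ N : ℕ, ∀ n : ℕ, N ≤ n → ∀ θ : ℝ, Grid n θ →
      ENNReal.ofReal (c3 / (α * n)) ≤ ∫⁻ t, ENNReal.ofReal |t - θ| ∂(Q n θ) := by
  obtain ⟨m, hm0, hm⟩ : ∃ m : ℕ, 0 < m ∧ 4 * c0 / α ≤ m :=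
    ⟨⌈4 * c0 / α⌉₊, Nat.ceil_pos.2 (by positivity), Nat.le_ceil _⟩
  set E := Real.exp (m * α)
  have hpow : ENNReal.ofReal (Real.exp α) ^ m = ENNReal.ofReal E := by
    rw [← ENNReal.ofReal_pow (Real.exp_pos α).le, ← Real.exp_nat_mul]
  have hη : Tendsto (fun n => m * ENNReal.ofReal E * ENNReal.ofReal (η n)) atTop (𝓝 0) := by
    have := ENNReal.tendsto_ofReal (by simpa using hneg 0)
    simpa using ENNReal.Tendsto.const_mul this
      (Or.inr (ENNReal.mul_ne_top (ENNReal.natCast_ne_top m) ENNReal.ofReal_ne_top))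
  obtain ⟨N, hN⟩ := eventually_atTop.1
    ((hη.eventually_le_const (by norm_num : (0 : ℝ≥0∞) < 4⁻¹)).and
      (eventually_ge_atTop (2 * m)))
  refine ⟨α * m / (8 * E), by positivity, N, fun n hn θ₀ ⟨a, ha, hθ₀⟩ => ?_⟩
  obtain ⟨hδ, hmn⟩ := hN n hn
  have hn0 : 0 < n := by omega
  obtain ⟨θ₁, hθ₁, hdist, htransfer⟩ :=
    exists_grid_dist_le_pow_mul_add (ENNReal.one_le_ofReal.2 (Real.one_le_exp hα.le)) (hDP n)
      ha hmn
  subst hθ₀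
  have hrisk : c0 / (α * n) ≤ m / (2 * n) / 2 := by
    rw [div_le_iff₀ hα] at hm
    rw [div_le_iff₀ (by positivity)]
    field_simp
    nlinarith
  have key := ofReal_div_le_lintegral_of_transfer (μ₁ := Q n θ₁) (r := m / (2 * n))
    (by positivity) (Real.exp_pos _) (le_of_eq (by rw [hdist]; field_simp)) hδ
    (by simpa [hpow] using htransfer) ((hub n hn0 θ₁ hθ₁).trans (ENNReal.ofReal_le_ofReal hrisk))
  convert key using 2
  simp only [E]
  field_simp
  ring

/-- **The `(α,η)`-approximate-DP relaxation does not escape the uniform lower bound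
(`k = 2`).** Suppose `Q_n(B|X) ≤ e^α Q_n(B|X') + η(n)` for neighboring inputs, with
`η` negligible (tending to `0` faster than any inverse polynomial). If the risk is
uniformly bounded above by `c₀/(αn)`, then for all sufficiently large `n` it is
uniformly bounded below by `c₃/(αn)` for some constant `c₃ > 0`. -/
theorem stmt13 (α c0 : ℝ) (hα : 0 < α) (hα1 : α < 1) (hc0 : 0 < c0)
    (Q : (n : ℕ) → ℝ → Measure ℝ) (hprob : ∀ n θ, IsProbabilityMeasure (Q n θ))
    (η : ℕ → ℝ) (hη0 : ∀ n, 0 ≤ η n)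
    (hneg : ∀ p : ℕ, Filter.Tendsto (fun n : ℕ => η n * (n : ℝ) ^ p)
      Filter.atTop (nhds 0))
    (hDP : ∀ n : ℕ, ∀ θ θ' : ℝ, Grid n θ → Grid n θ' → |θ - θ'| ≤ 1 / (n : ℝ) →
      ∀ B : Set ℝ, MeasurableSet B →
        Q n θ B ≤ ENNReal.ofReal (Real.exp α) * Q n θ' B + ENNReal.ofReal (η n))
    (hub : ∀ n : ℕ, 0 < n → ∀ θ : ℝ, Grid n θ →
      ∫⁻ t, ENNReal.ofReal |t - θ| ∂(Q n θ) ≤ ENNReal.ofReal (c0 / (α * n))) :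
    ∃ c3 : ℝ, 0 < c3 ∧ ∃ N : ℕ, ∀ n : ℕ, N ≤ n → ∀ θ : ℝ, Grid n θ →
      ENNReal.ofReal (c3 / (α * n)) ≤ ∫⁻ t, ENNReal.ofReal |t - θ| ∂(Q n θ) :=
  stmt13_general α c0 hα hc0 Q hprob η hneg hDP hub
end

section
/- For the hypercube construction {((σ_1 τ)/n, ..., (σ_{k−1}τ)/n, (n − τΣσ_i)/n) : σ ∈ {0,1}^{k−1}} of histograms, any two neighboring corners θ, θ' (differing in one σ_i) correspond to databases differing in exactly τ data points; hence under α-DP, KL(Q_n(·|θ) ‖ Q_n(·|θ')) ≤ ατ, and by the Kullback–Csiszár–Kemperman (Pinsker-type) inequality the testing affinity satisfies ‖Q_n(·|θ) ∧ Q_n(·|θ')‖ ≥ 1 − √(ατ/2). -/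
open MeasureTheory

noncomputable def klDiv {𝒵 : Type*} [MeasurableSpace 𝒵] (μ ν : Measure 𝒵) : ℝ :=
  ∫ z, Real.log ((μ.rnDeriv ν z).toReal) ∂μ

def IsHist (n k : ℕ) (θ : Fin k → ℝ) : Prop :=
  (∀ j, ∃ m : ℕ, θ j = (m : ℝ) / n) ∧ (∑ j, θ j) = 1

noncomputable def l1 {k : ℕ} (θ θ' : Fin k → ℝ) : ℝ := ∑ j, |θ j - θ' j|

open Classical in
/-- A corner of the hypercube
`{((σ₁τ)/n, …, (σ_{k-1}τ)/n, (n - τΣσᵢ)/n) : σ ∈ {0,1}^{k-1}}`, with `k = K+1`. -/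
noncomputable def corner (n τ K : ℕ) (σ : Fin K → Bool) : Fin (K + 1) → ℝ :=
  fun j =>
    if h : (j : ℕ) < K then (if σ ⟨j, h⟩ then (τ : ℝ) / n else 0)
    else ((n : ℝ) - τ * ((Finset.univ.filter fun i => σ i = true).card : ℝ)) / n


/-! Neighbouring corners differ by `τ / n` in coordinate `i` and in the last coordinate, so their
ℓ¹ distance is `2τ / n` and the privacy hypothesis becomes the domination
`Q θ ≤ e^{ατ} • Q θ'`. Domination bounds the density `dQ θ / dQ θ'` by `e^{ατ}`, hence the KL
divergence by `ατ`. Instead of going through Pinsker, domination also gives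
`e^{-ατ} • Q θ ≤ Q θ ⊓ Q θ'` directly, so the affinity is at least `e^{-ατ} ≥ 1 - √(ατ / 2)`. -/

open scoped ENNReal

theorem Real.one_sub_mul_exp_two_mul_sq_le_one {t : ℝ} (ht : 0 ≤ t) :
    (1 - t) * Real.exp (2 * t ^ 2) ≤ 1 := by
  have hderiv (t : ℝ) : HasDerivAt (fun t => (1 - t) * Real.exp (2 * t ^ 2))
      (-(Real.exp (2 * t ^ 2) * (1 - 2 * t) ^ 2)) t := by
    have := ((hasDerivAt_id t).const_sub 1).mul (((hasDerivAt_pow 2 t).const_mul 2).exp)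
    exact this.congr_deriv (by simp only [id, Nat.cast_ofNat]; ring)
  have hanti : Antitone fun t => (1 - t) * Real.exp (2 * t ^ 2) :=
    antitone_of_deriv_nonpos (fun t => (hderiv t).differentiableAt)
      fun t => (hderiv t).deriv ▸ neg_nonpos.2 (by positivity)
  simpa using hanti ht

theorem Real.one_sub_sqrt_half_le_exp_neg {x : ℝ} (hx : 0 ≤ x) :
    1 - √(x / 2) ≤ Real.exp (-x) := by
  have hx' : x = 2 * √(x / 2) ^ 2 := by rw [Real.sq_sqrt (by positivity)]; ring
  have := Real.one_sub_mul_exp_two_mul_sq_le_one (Real.sqrt_nonneg (x / 2))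
  rwa [← hx', ← le_div_iff₀ (Real.exp_pos x), one_div, ← Real.exp_neg] at this

namespace MeasureTheory.Measure

variable {α : Type*} [MeasurableSpace α] {μ ν : Measure α}

theorem rnDeriv_le_of_le_smul [IsFiniteMeasure μ] [SigmaFinite ν] {c : ℝ≥0∞} (hc : c ≠ ∞)
    (h : μ ≤ c • ν) : μ.rnDeriv ν ≤ᵐ[ν] fun _ => c := by
  rcases eq_or_ne c 0 with rfl | hc0
  · obtain rfl : μ = 0 := le_antisymm (by simpa using h) μ.zero_le
    filter_upwards [rnDeriv_zero ν] with z hz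
    simp [hz]
  have hle : c⁻¹ • μ ≤ ν :=
    calc c⁻¹ • μ ≤ c⁻¹ • c • ν := by gcongr
      _ = ν := by rw [smul_smul, ENNReal.inv_mul_cancel hc0 hc, one_smul]
  filter_upwards [rnDeriv_le_one_of_le hle,
    rnDeriv_smul_left_of_ne_top μ ν (ENNReal.inv_ne_top.2 hc0)] with z h1 h2
  rwa [h2, Pi.smul_apply, smul_eq_mul, Pi.one_apply, ENNReal.inv_mul_le_iff hc0 hc,
    mul_one] at h1

theorem inv_smul_le_inf_of_le_smul {c : ℝ≥0∞} (hc : 1 ≤ c) (h : μ ≤ c • ν) :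
    c⁻¹ • μ ≤ μ ⊓ ν := by
  refine le_inf ?_ ?_
  · calc c⁻¹ • μ ≤ (1 : ℝ≥0∞) • μ := by gcongr; exact ENNReal.inv_le_one.2 hc
      _ = μ := one_smul _ _
  · calc c⁻¹ • μ ≤ c⁻¹ • c • ν := by gcongr
      _ = (c⁻¹ * c) • ν := smul_smul _ _ _
      _ ≤ (1 : ℝ≥0∞) • ν := by gcongr; exact ENNReal.inv_mul_le_one c
      _ = ν := one_smul _ _

theorem ofReal_exp_neg_le_inf_apply_univ [IsProbabilityMeasure μ] {a : ℝ} (ha : 0 ≤ a)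
    (h : μ ≤ ENNReal.ofReal (Real.exp a) • ν) :
    ENNReal.ofReal (Real.exp (-a)) ≤ (μ ⊓ ν) Set.univ := by
  have hc : 1 ≤ ENNReal.ofReal (Real.exp a) := by simpa using Real.one_le_exp ha
  calc ENNReal.ofReal (Real.exp (-a)) = ((ENNReal.ofReal (Real.exp a))⁻¹ • μ) Set.univ := by
        simp [Real.exp_neg, ENNReal.ofReal_inv_of_pos (Real.exp_pos a)]
    _ ≤ (μ ⊓ ν) Set.univ := inv_smul_le_inf_of_le_smul hc h Set.univ

end MeasureTheory.Measure

theorem klDiv_le_of_le_smul {α : Type*} [MeasurableSpace α] {μ ν : Measure α}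
    [IsProbabilityMeasure μ] [SigmaFinite ν] {a : ℝ} (ha : 0 ≤ a)
    (h : μ ≤ ENNReal.ofReal (Real.exp a) • ν) : klDiv μ ν ≤ a := by
  have hbound : ∀ᵐ z ∂μ, Real.log (μ.rnDeriv ν z).toReal ≤ a := by
    filter_upwards [(Measure.absolutelyContinuous_of_le_smul h).ae_le
      (Measure.rnDeriv_le_of_le_smul ENNReal.ofReal_ne_top h)] with z hz
    have hz' : (μ.rnDeriv ν z).toReal ≤ Real.exp a :=
      ENNReal.toReal_le_of_le_ofReal (Real.exp_pos a).le hz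
    rcases ENNReal.toReal_nonneg.eq_or_lt with h0 | h0
    · rwa [← h0, Real.log_zero]
    · exact (Real.log_le_iff_le_exp h0).2 hz'
  by_cases hint : Integrable (fun z => Real.log (μ.rnDeriv ν z).toReal) μ
  · calc klDiv μ ν ≤ ∫ _, a ∂μ := integral_mono_ae hint (integrable_const a) hbound
      _ = a := by simp
  · rwa [klDiv, integral_undef hint]

open Finset

section Corner

variable {n τ K : ℕ}

@[simp]
theorem corner_castSucc (σ : Fin K → Bool) (j : Fin K) :
    corner n τ K σ j.castSucc = if σ j then (τ : ℝ) / n else 0 := by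
  simp [corner]

@[simp]
theorem corner_last (σ : Fin K → Bool) :
    corner n τ K σ (Fin.last K) = ((n : ℝ) - τ * #{j | σ j}) / n := by
  simp [corner]

theorem abs_card_filter_update_not_sub {ι : Type*} [Fintype ι] [DecidableEq ι] (σ : ι → Bool)
    (i : ι) : |(#{j | Function.update σ i (!σ i) j} : ℝ) - #{j | σ j}| = 1 := by
  simp only [natCast_card_filter, Fintype.sum_eq_add_sum_compl i, Function.update_self]
  rw [Finset.sum_congr rfl fun j hj => by rw [Function.update_of_ne (by simpa using hj)]]
  cases σ i <;> simp

theorem corner_isHist (hn : 0 < n) (hτK : τ * K ≤ n) (σ : Fin K → Bool) :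
    IsHist n (K + 1) (corner n τ K σ) := by
  set c := #{j | σ j}
  have hcard : τ * c ≤ n :=
    (Nat.mul_le_mul_left τ ((card_filter_le _ _).trans (card_fin K).le)).trans hτK
  constructor
  · intro j
    induction j using Fin.lastCases with
    | last => exact ⟨n - τ * c, by simp [c, Nat.cast_sub hcard]⟩
    | cast j =>
      cases h : σ j
      · exact ⟨0, by simp [h]⟩
      · exact ⟨τ, by simp [h]⟩
  · have hn' : (n : ℝ) ≠ 0 := by positivity
    simp only [Fin.sum_univ_castSucc, corner_castSucc, corner_last, ← sum_filter, sum_const,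
      nsmul_eq_mul]
    field_simp
    ring

theorem l1_corner_update_not (σ : Fin K → Bool) (i : Fin K) :
    l1 (corner n τ K σ) (corner n τ K (Function.update σ i (!σ i))) = 2 * τ / n := by
  set σ' := Function.update σ i (!σ i)
  have hcoord : ∑ j : Fin K, |corner n τ K σ j.castSucc - corner n τ K σ' j.castSucc| = τ / n := by
    rw [Fintype.sum_eq_single i fun j hj => by simp [σ', Function.update_of_ne hj]]
    simp only [corner_castSucc, σ', Function.update_self]
    cases σ i <;> simp [abs_div]
  have hlast : |corner n τ K σ (Fin.last K) - corner n τ K σ' (Fin.last K)| = τ / n := by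
    calc _ = |((τ : ℝ) / n) * ((#{j | σ' j} : ℝ) - #{j | σ j})| := by
          rw [corner_last, corner_last]
          ring_nf
      _ = τ / n := by
          rw [abs_mul, abs_card_filter_update_not_sub, mul_one, abs_of_nonneg (by positivity)]
  rw [l1, Fin.sum_univ_castSucc, hcoord, hlast]
  ring

end Corner

theorem stmt16_general {𝒵 : Type*} [MeasurableSpace 𝒵] {n τ K : ℕ}
    (hn : 0 < n) (hτK : τ * K ≤ n)
    (Q : (Fin (K + 1) → ℝ) → Measure 𝒵) (hprob : ∀ θ, IsProbabilityMeasure (Q θ))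
    (α : ℝ) (hα : 0 < α)
    (hDP : ∀ θ θ' : Fin (K + 1) → ℝ, IsHist n (K + 1) θ → IsHist n (K + 1) θ' →
      ∀ B : Set 𝒵, MeasurableSet B →
        Q θ B ≤ ENNReal.ofReal (Real.exp (α * ((n : ℝ) / 2) * l1 θ θ')) * Q θ' B)
    (σ σ' : Fin K → Bool) (i : Fin K) (hne : σ' = Function.update σ i (!σ i)) :
    klDiv (Q (corner n τ K σ)) (Q (corner n τ K σ')) ≤ α * τ ∧
    ENNReal.ofReal (1 - Real.sqrt (α * τ / 2)) ≤
      (Q (corner n τ K σ) ⊓ Q (corner n τ K σ')) Set.univ := by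
  subst hne
  have ha : 0 ≤ α * τ := by positivity
  have hdom : Q (corner n τ K σ) ≤
      ENNReal.ofReal (Real.exp (α * τ)) • Q (corner n τ K (Function.update σ i (!σ i))) := by
    refine Measure.le_iff.2 fun B hB => ?_
    have := hDP _ _ (corner_isHist hn hτK σ) (corner_isHist hn hτK (Function.update σ i (!σ i))) B hB
    rwa [l1_corner_update_not, show α * (n / 2) * (2 * τ / n) = α * τ by field_simp] at this
  exact ⟨klDiv_le_of_le_smul ha hdom,
    (ENNReal.ofReal_le_ofReal (Real.one_sub_sqrt_half_le_exp_neg ha)).trans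
      (Measure.ofReal_exp_neg_le_inf_apply_univ ha hdom)⟩

/-- **KL and affinity bounds at neighboring hypercube corners.** Under `α`-DP (so the
log density ratio is bounded by `α` per data-point change, and hence by `α·(n/2)·ℓ₁`
in general), neighboring corners `θ, θ'` differ in exactly `τ` data points, so
`KL(Q(·|θ) ‖ Q(·|θ')) ≤ ατ`, and by the Kullback–Csiszár–Kemperman (Pinsker-type)
inequality the testing affinity satisfies `‖Q(·|θ) ∧ Q(·|θ')‖ ≥ 1 - √(ατ/2)`. -/
theorem stmt16 {𝒵 : Type*} [MeasurableSpace 𝒵] {n τ K : ℕ}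
    (hn : 0 < n) (hτ : 0 < τ) (hτK : τ * K ≤ n)
    (Q : (Fin (K + 1) → ℝ) → Measure 𝒵) (hprob : ∀ θ, IsProbabilityMeasure (Q θ))
    (α : ℝ) (hα : 0 < α)
    (hDP : ∀ θ θ' : Fin (K + 1) → ℝ, IsHist n (K + 1) θ → IsHist n (K + 1) θ' →
      ∀ B : Set 𝒵, MeasurableSet B →
        Q θ B ≤ ENNReal.ofReal (Real.exp (α * ((n : ℝ) / 2) * l1 θ θ')) * Q θ' B)
    (σ σ' : Fin K → Bool) (i : Fin K) (hne : σ' = Function.update σ i (!σ i)) :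
    klDiv (Q (corner n τ K σ)) (Q (corner n τ K σ')) ≤ α * τ ∧
    ENNReal.ofReal (1 - Real.sqrt (α * τ / 2)) ≤
      (Q (corner n τ K σ) ⊓ Q (corner n τ K σ')) Set.univ :=
  stmt16_general hn hτK Q hprob α hα hDP σ σ' i hne
end
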